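/- arXiv:0712.1269 — 2 statements merged into one kernel-verified Lean document; each statement's English description precedes it below -/
import Mathlib

section
/- If a ∈ ℝ^E is metric and the inequality a·x ≥ α is valid for the symmetric traveling salesman polytope S (i.e., a·χ^{E(C)} ≥ α for every Hamiltonian cycle C on V), then a·x ≥ α holds for every x in the graphical traveling salesman polyhedron P. -/
open scoped BigOperators

abbrev Edge (n : ℕ) := {e : Sym2 (Fin n) // ¬ e.IsDiag}

namespace TSP
variable {n : ℕ}
noncomputable section

def dot (a x : Edge n → ℝ) : ℝ := ∑ e, a e * x e
def ev (a : Edge n → ℝ) (u v : Fin n) : ℝ :=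
  if h : u = v then 0 else a ⟨s(u, v), fun hd => h (Sym2.mk_isDiag_iff.mp hd)⟩
def indic (u v : Fin n) : Edge n → ℝ := fun e => if e.val = s(u, v) then 1 else 0
def delta (u : Fin n) : Edge n → ℝ := fun e => if u ∈ e.val then 1/2 else 0
def RootedTri (u v w : Fin n) : Prop := v ≠ w ∧ u ≠ v ∧ u ≠ w
def tri (a : Edge n → ℝ) (u v w : Fin n) : ℝ := ev a v u + ev a u w - ev a v w
def IsMetric (a : Edge n → ℝ) : Prop := ∀ u v w, RootedTri u v w → 0 ≤ tri a u v w
def IsTT (a : Edge n → ℝ) : Prop :=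
  IsMetric a ∧ ∀ u, ∃ v w, RootedTri u v w ∧ tri a u v w = 0
def lam (a : Edge n → ℝ) (u : Fin n) : ℝ :=
  sInf {r | ∃ v w, RootedTri u v w ∧ r = tri a u v w}
def theta (a : Edge n → ℝ) : Edge n → ℝ := fun e => a e - ∑ u, lam a u * delta u e
def zvec (n : ℕ) : Edge n → ℝ := fun _ => 2 / ((n : ℝ) - 1)
def gamma (a : Edge n → ℝ) : ℝ := -1 + dot a (zvec n) - ∑ u, lam a u
def nextF (i : Fin n) : Fin n := ⟨(i.val + 1) % n, Nat.mod_lt _ i.pos⟩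
def hamVec (σ : Equiv.Perm (Fin n)) : Edge n → ℝ :=
  fun e => if ∃ i : Fin n, e.val = s(σ i, σ (nextF i)) then 1 else 0
def stsp (n : ℕ) : Set (Edge n → ℝ) :=
  convexHull ℝ {x | ∃ σ : Equiv.Perm (Fin n), x = hamVec σ}
def degree (x : Edge n → ℝ) (u : Fin n) : ℝ := ∑ e, if u ∈ e.val then x e else 0
lemma ev_symm (a : Edge n → ℝ) (u v : Fin n) : ev a u v = ev a v u := by
  unfold ev
  rcases eq_or_ne u v with h | h
  · subst h; simp
  · rw [dif_neg h, dif_neg (Ne.symm h)]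
    congr 1
    exact Subtype.ext (Sym2.eq_swap)
def supportGraph (x : Edge n → ℝ) : SimpleGraph (Fin n) where
  Adj u v := u ≠ v ∧ 0 < ev x u v
  symm := ⟨fun u v h => ⟨h.1.symm, by rw [ev_symm]; exact h.2⟩⟩
  loopless := ⟨fun u h => h.1 rfl⟩
def IsEulerian (x : Edge n → ℝ) : Prop :=
  (∀ e, ∃ m : ℕ, x e = m) ∧ (supportGraph x).Connected ∧
    ∀ u, ∃ m : ℕ, 0 < m ∧ degree x u = 2 * m
def gtsp (n : ℕ) : Set (Edge n → ℝ) := convexHull ℝ {x | IsEulerian x}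
def IsFaceOf (Q F : Set (Edge n → ℝ)) : Prop :=
  ∃ a α, (∀ x ∈ Q, α ≤ dot a x) ∧ F = {x ∈ Q | dot a x = α}
def IsGood (F : Set (Edge n → ℝ)) : Prop := ∀ e : Edge n, ∃ x ∈ F, 0 < x e
def adim (X : Set (Edge n → ℝ)) : ℕ := Module.finrank ℝ (affineSpan ℝ X).direction
def direc (F : Set (Edge n → ℝ)) : Submodule ℝ (Edge n → ℝ) :=
  Submodule.span ℝ {d | ∃ x ∈ F, ∃ y ∈ F, d = y - x}
def shortcut (u v w : Fin n) : Edge n → ℝ :=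
  fun e => indic v w e - indic v u e - indic u w e
def gtspPolar (n : ℕ) : Set (Edge n → ℝ) := {b | ∀ x ∈ gtsp n, 1 ≤ dot b x}

/-- The face of `S` defined by `a ∈ D_S`. -/
def faceS (a : Edge n → ℝ) : Set (Edge n → ℝ) :=
  {x ∈ stsp n | dot a x = dot a (zvec n) - 1}

/-- `D_S`: the points `a ∈ L` whose inequality `a·x ≥ a·z − 1` is valid for `S`
and defines a nonempty good face of `S`. -/
def DS (n : ℕ) : Set (Edge n → ℝ) :=
  {a | (∀ u, dot (delta u) a = 0) ∧
       (∀ x ∈ stsp n, dot a (zvec n) - 1 ≤ dot a x) ∧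
       (faceS a).Nonempty ∧ IsGood (faceS a)}

/-- `D_P`: TT points of `P^△` defining nonempty good faces of `P`. -/
def DP (n : ℕ) : Set (Edge n → ℝ) :=
  {b | b ∈ gtspPolar n ∧ IsTT b ∧
       ({x ∈ gtsp n | dot b x = 1}).Nonempty ∧ IsGood {x ∈ gtsp n | dot b x = 1}}

/-- `𝔉(a)`: faces of `P` definable by rotated versions of `a·x ≥ a·z − 1`. -/
def Frot (a : Edge n → ℝ) : Set (Set (Edge n → ℝ)) :=
  {F | ∃ ξ : Fin n → ℝ,
    (∀ x ∈ gtsp n,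
      dot a (zvec n) - 1 + dot (∑ u, ξ u • delta u) (zvec n)
        ≤ dot (a + ∑ u, ξ u • delta u) x) ∧
    F = {x ∈ gtsp n |
      dot (a + ∑ u, ξ u • delta u) x
        = dot a (zvec n) - 1 + dot (∑ u, ξ u • delta u) (zvec n)}}

/-- `E^u(a)`: the edges achieving the minimal triangle slack rooted at `u`. -/
def Eu (a : Edge n → ℝ) (u : Fin n) : Set (Edge n) :=
  {e | ∃ v w, RootedTri u v w ∧ e.val = s(v, w) ∧ tri a u v w = lam a u}

def IsFacetP (n : ℕ) (G : Set (Edge n → ℝ)) : Prop :=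
  IsFaceOf (gtsp n) G ∧ adim G = n * (n - 1) / 2 - 1
def IsFacetS (n : ℕ) (F : Set (Edge n → ℝ)) : Prop :=
  IsFaceOf (stsp n) F ∧ adim F + 1 = adim (stsp n)
def IsNRFacet (n : ℕ) (G : Set (Edge n → ℝ)) : Prop :=
  IsFacetP n G ∧ IsFacetS n (G ∩ stsp n)
def IsDegreeFacet (n : ℕ) (G : Set (Edge n → ℝ)) : Prop :=
  ∃ u, G = {x ∈ gtsp n | dot (delta u) x = 1}
def IsNonNegFacet (n : ℕ) (G : Set (Edge n → ℝ)) : Prop :=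
  ∃ e : Edge n, G = {x ∈ gtsp n | x e = 0}
def IsNonNRFacet (n : ℕ) (G : Set (Edge n → ℝ)) : Prop :=
  IsFacetP n G ∧ IsGood G ∧ ¬ IsDegreeFacet n G ∧
    adim (G ∩ stsp n) + 1 < adim (stsp n)

/-- Solution set of the relaxation `R_B` (degree inequalities). -/
def RBge {k : ℕ} (n : ℕ) (b : Fin k → Edge n → ℝ) : Set (Edge n → ℝ) :=
  {x | (∀ j, 1 ≤ dot (b j) x) ∧ (∀ v, 1 ≤ dot (delta v) x) ∧ ∀ e, 0 ≤ x e}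

/-- Solution set of `R_B` with degree equations. -/
def RBeq {k : ℕ} (n : ℕ) (b : Fin k → Edge n → ℝ) : Set (Edge n → ℝ) :=
  {x | (∀ j, 1 ≤ dot (b j) x) ∧ (∀ v, dot (delta v) x = 1) ∧ ∀ e, 0 ≤ x e}

/-- The parsimonious property of the relaxation `R_B`. -/
def Parsimonious {k : ℕ} (n : ℕ) (b : Fin k → Edge n → ℝ) : Prop :=
  ∀ c : Edge n → ℝ, IsMetric c →
    sInf (dot c '' RBge n b) = sInf (dot c '' RBeq n b)

/-- Adjacency in the ridge graph of `P`. -/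
def RidgeAdj (n : ℕ) (F G : Set (Edge n → ℝ)) : Prop :=
  IsFacetP n F ∧ IsFacetP n G ∧ F ≠ G ∧ adim (F ∩ G) = n * (n - 1) / 2 - 2

/-- `q_I = Σ_{u ∉ I} δ_u`. -/
def qI (n : ℕ) (I : Finset (Fin n)) : Edge n → ℝ := ∑ u ∈ Iᶜ, delta u

/-- The face `G_I` of `P`. -/
def GI (n : ℕ) (a : Edge n → ℝ) (I : Finset (Fin n)) : Set (Edge n → ℝ) :=
  {x ∈ gtsp n | dot (theta a + qI n I) x = gamma a + dot (qI n I) (zvec n)}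

end


/-! By convexity it suffices to bound `a · f` for a connected Eulerian multigraph `f`, and we
induct on its number of edges. An edge of multiplicity at least three loses two copies; otherwise
a vertex `u` of degree at least four has two distinct neighbours `v`, `w`, and the path
`v – u – w` is shortcut to the edge `v – w`, with `v`, `w` chosen so that the multigraph stays
connected. Metric costs are nonnegative and obey the triangle inequality, so neither step
increases the cost. What remains is connected and 2-regular without parallel edges, i.e. a
Hamiltonian cycle. -/

open Finset SimpleGraph

lemma sum_ite_sym2_eq_mk {α M : Type*} [Fintype α] [DecidableEq α] [AddCommMonoid M]
    (z : Sym2 α) (p : α) (c : M) :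
    ∑ q, (if z = s(p, q) then c else 0) = if p ∈ z then c else 0 := by
  by_cases hp : p ∈ z
  · obtain ⟨o, rfl⟩ : ∃ o, z = s(p, o) := ⟨_, (Sym2.other_spec hp).symm⟩
    simp only [Sym2.congr_right, if_pos hp, sum_ite_eq, mem_univ, if_true]
  · rw [if_neg hp]
    exact sum_eq_zero fun q _ => if_neg fun h : z = s(p, q) => hp (h ▸ Sym2.mem_mk_left p q)

lemma eq_of_reachable_deleteIncidenceSet {V : Type*} {G : SimpleGraph V} {p u : V}
    (h : (G.deleteIncidenceSet u).Reachable u p) : p = u := by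
  obtain ⟨w⟩ := h
  cases w with
  | nil => rfl
  | cons h _ => exact absurd rfl (deleteIncidenceSet_adj.mp h).2.1

lemma not_adj_of_reachable_deleteIncidenceSet {V : Type*} {G : SimpleGraph V} {p q r u : V}
    (hpu : p ≠ u) (hq : (G.deleteIncidenceSet u).Reachable p q)
    (hr : ¬ (G.deleteIncidenceSet u).Reachable p r) (hru : r ≠ u) : ¬ G.Adj q r := fun h => by
  have hqu : q ≠ u := by
    rintro rfl
    exact hpu (eq_of_reachable_deleteIncidenceSet hq.symm)
  exact hr (hq.trans (deleteIncidenceSet_adj.2 ⟨h, hqu, hru⟩).reachable)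

lemma even_sum_sum_of_symm {α : Type*} [DecidableEq α] (m : α → α → ℕ)
    (hsymm : ∀ p q, m p q = m q p) (hdiag : ∀ p, m p p = 0) (C : Finset α) :
    Even (∑ p ∈ C, ∑ q ∈ C, m p q) := by
  induction C using Finset.induction_on with
  | empty => simp
  | insert a s ha ih =>
    have : ∑ p ∈ insert a s, ∑ q ∈ insert a s, m p q
        = 2 * ∑ q ∈ s, m a q + ∑ p ∈ s, ∑ q ∈ s, m p q := by
      simp only [sum_insert ha, hdiag, sum_add_distrib, hsymm _ a]
      ring
    rw [this]
    exact (even_two_mul _).add ih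

lemma exists_ne_and_ne (hn : 3 ≤ n) (p q : Fin n) : ∃ z, z ≠ p ∧ z ≠ q := by
  obtain ⟨z, -, hz⟩ := exists_mem_notMem_of_card_lt_card (s := {p, q}) (t := univ)
    (by simpa using card_le_two.trans_lt (by omega : 2 < n))
  exact ⟨z, by simpa [not_or] using hz⟩

lemma ev_of_ne (a : Edge n → ℝ) {u v : Fin n} (h : u ≠ v) :
    ev a u v = a ⟨s(u, v), Sym2.mk_isDiag_iff.not.mpr h⟩ :=
  dif_neg h

lemma IsMetric.ev_nonneg {a : Edge n → ℝ} (hmet : IsMetric a) (hn : 3 ≤ n) (u w : Fin n) :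
    0 ≤ ev a u w := by
  rcases eq_or_ne u w with rfl | huw
  · simp [ev]
  obtain ⟨v, hvu, hvw⟩ := exists_ne_and_ne hn u w
  have h₁ := hmet u v w ⟨hvw, hvu.symm, huw⟩
  have h₂ := hmet w v u ⟨hvu, hvw.symm, huw.symm⟩
  simp only [tri] at h₁ h₂
  linarith [ev_symm a v u, ev_symm a w u, ev_symm a v w]

lemma isLinearMap_dot (a : Edge n → ℝ) : IsLinearMap ℝ (dot a) :=
  ⟨fun x y => by simp [dot, mul_add, sum_add_distrib],
    fun c x => by simp [dot, mul_sum, mul_left_comm]⟩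

lemma sum_ite_val_eq {M : Type*} [AddCommMonoid M] (e : Edge n) (c : Edge n → M) :
    ∑ e' : Edge n, (if e'.val = e.val then c e' else 0) = c e := by
  simp_rw [← Subtype.ext_iff]
  simp

section Multigraph

def mult (f : Edge n → ℕ) (p q : Fin n) : ℕ := ∑ e, if e.val = s(p, q) then f e else 0

def mdeg (f : Edge n → ℕ) (p : Fin n) : ℕ := ∑ q, mult f p q

def edgeUnit (z : Sym2 (Fin n)) : Edge n → ℕ := fun e => if e.val = z then 1 else 0

def multigraph (f : Edge n → ℕ) : SimpleGraph (Fin n) := supportGraph (Nat.cast ∘ f)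

structure IsEulerianMultigraph (f : Edge n → ℕ) : Prop where
  connected : (multigraph f).Connected
  even : ∀ p, Even (mdeg f p)
  pos : ∀ p, 0 < mdeg f p

variable {f : Edge n → ℕ}

lemma mult_of_val_eq {e : Edge n} {p q : Fin n} (h : e.val = s(p, q)) : mult f p q = f e := by
  rw [mult, ← h, sum_ite_val_eq]

lemma mult_congr (f : Edge n → ℕ) {p q p' q' : Fin n} (h : s(p, q) = s(p', q')) :
    mult f p q = mult f p' q' := by
  simp only [mult, h]

lemma mult_comm (f : Edge n → ℕ) (p q : Fin n) : mult f p q = mult f q p :=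
  mult_congr f Sym2.eq_swap

@[simp] lemma mult_self (f : Edge n → ℕ) (p : Fin n) : mult f p p = 0 :=
  sum_eq_zero fun e _ => if_neg fun h => e.prop (by rw [h]; exact Sym2.mk_isDiag_iff.mpr rfl)

lemma mult_add (f g : Edge n → ℕ) (p q : Fin n) :
    mult (f + g) p q = mult f p q + mult g p q := by
  simp only [mult, Pi.add_apply, ← sum_add_distrib, ite_add_zero]

lemma mult_edgeUnit {u v : Fin n} (huv : u ≠ v) (p q : Fin n) :
    mult (edgeUnit s(u, v)) p q = if s(u, v) = s(p, q) then 1 else 0 := by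
  by_cases h : s(u, v) = s(p, q)
  · rw [if_pos h, mult_of_val_eq (e := ⟨s(u, v), Sym2.mk_isDiag_iff.not.mpr huv⟩) h, edgeUnit,
      if_pos rfl]
  · rw [if_neg h]
    exact sum_eq_zero fun e _ => by
      simp only [edgeUnit]
      split_ifs with h₁ h₂ <;> first | rfl | exact absurd (h₂.symm.trans h₁) h

lemma mdeg_eq_sum (f : Edge n → ℕ) (p : Fin n) :
    mdeg f p = ∑ e, if p ∈ e.val then f e else 0 := by
  simp only [mdeg, mult]
  rw [sum_comm]
  exact sum_congr rfl fun e _ => sum_ite_sym2_eq_mk _ p _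

lemma mult_le_mdeg (f : Edge n → ℕ) (p q : Fin n) : mult f p q ≤ mdeg f p :=
  single_le_sum (fun _ _ => Nat.zero_le _) (mem_univ q)

lemma mult_add_mult_le_mdeg (f : Edge n → ℕ) (p : Fin n) {q r : Fin n} (hqr : q ≠ r) :
    mult f p q + mult f p r ≤ mdeg f p := by
  rw [← sum_pair hqr]
  exact sum_le_sum_of_subset (subset_univ _)

lemma exists_mult_pos_of_mdeg_pos {p : Fin n} (h : 0 < mdeg f p) : ∃ q, 0 < mult f p q := by
  obtain ⟨q, -, hq⟩ := exists_ne_zero_of_sum_ne_zero h.ne'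
  exact ⟨q, Nat.pos_of_ne_zero hq⟩

lemma mdeg_add (f g : Edge n → ℕ) (p : Fin n) : mdeg (f + g) p = mdeg f p + mdeg g p := by
  simp only [mdeg, mult_add, sum_add_distrib]

lemma mdeg_edgeUnit {u v : Fin n} (huv : u ≠ v) (p : Fin n) :
    mdeg (edgeUnit s(u, v)) p = if p = u ∨ p = v then 1 else 0 := by
  simp_rw [mdeg, mult_edgeUnit huv, sum_ite_sym2_eq_mk, Sym2.mem_iff]

lemma sum_edgeUnit {u v : Fin n} (huv : u ≠ v) : ∑ e, edgeUnit s(u, v) e = 1 :=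
  sum_ite_val_eq ⟨s(u, v), Sym2.mk_isDiag_iff.not.mpr huv⟩ fun _ => 1

lemma exists_eq_add_edgeUnit {u v : Fin n} (h : 0 < mult f u v) :
    ∃ g, f = g + edgeUnit s(u, v) := by
  refine ⟨f - edgeUnit s(u, v), funext fun e => ?_⟩
  simp only [Pi.add_apply, Pi.sub_apply, edgeUnit]
  split_ifs with he
  · have := mult_of_val_eq (f := f) he
    omega
  · rfl

lemma dot_natCast_add (a : Edge n → ℝ) (f g : Edge n → ℕ) :
    dot a (Nat.cast ∘ (f + g)) = dot a (Nat.cast ∘ f) + dot a (Nat.cast ∘ g) := by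
  simp only [dot, Function.comp_apply, Pi.add_apply, Nat.cast_add, mul_add, sum_add_distrib]

lemma dot_natCast_edgeUnit (a : Edge n → ℝ) {u v : Fin n} (huv : u ≠ v) :
    dot a (Nat.cast ∘ edgeUnit s(u, v)) = ev a u v := by
  simp only [dot, Function.comp_apply, edgeUnit, Nat.cast_ite, Nat.cast_one, Nat.cast_zero,
    mul_ite, mul_one, mul_zero]
  rw [ev_of_ne a huv]
  exact sum_ite_val_eq ⟨s(u, v), _⟩ a

lemma ev_natCast (f : Edge n → ℕ) (p q : Fin n) : ev (Nat.cast ∘ f) p q = mult f p q := by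
  rcases eq_or_ne p q with rfl | h
  · simp [ev]
  · rw [ev_of_ne _ h, mult_of_val_eq (e := ⟨s(p, q), _⟩) rfl]
    rfl

lemma degree_natCast (f : Edge n → ℕ) (p : Fin n) : degree (Nat.cast ∘ f) p = mdeg f p := by
  simp [degree, mdeg_eq_sum]

lemma multigraph_adj {p q : Fin n} : (multigraph f).Adj p q ↔ 0 < mult f p q := by
  change p ≠ q ∧ 0 < ev _ p q ↔ _
  rw [ev_natCast, Nat.cast_pos]
  exact ⟨And.right, fun h => ⟨by rintro rfl; simp at h, h⟩⟩

lemma isEulerianMultigraph_of_isEulerian (h : IsEulerian (Nat.cast ∘ f : Edge n → ℝ)) :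
    IsEulerianMultigraph f := by
  obtain ⟨-, hconn, hdeg⟩ := h
  refine ⟨hconn, fun p => ?_, fun p => ?_⟩ <;>
  · obtain ⟨m, hm, hd⟩ := hdeg p
    rw [degree_natCast] at hd
    norm_cast at hd
    first | exact ⟨m, by omega⟩ | omega

lemma even_sum_mult_of_closed (heven : ∀ p, Even (mdeg f p)) {C : Finset (Fin n)} {u : Fin n}
    (hu : u ∉ C) (hC : ∀ p ∈ C, ∀ q ∉ C, q ≠ u → mult f p q = 0) :
    Even (∑ p ∈ C, mult f p u) := by
  have hsplit : ∑ p ∈ C, mdeg f p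
      = ∑ p ∈ C, ∑ q ∈ C, mult f p q + ∑ p ∈ C, mult f p u := by
    rw [← sum_add_distrib]
    refine sum_congr rfl fun p hp => ?_
    rw [mdeg, ← sum_add_sum_compl C, sum_eq_single_of_mem u (mem_compl.2 hu)]
    exact fun q hq hqu => hC p hp q (mem_compl.1 hq) hqu
  have h := even_sum (s := C) _ fun p _ => heven p
  rw [hsplit] at h
  exact (Nat.even_add.mp h).mp (even_sum_sum_of_symm _ (mult_comm f) (mult_self f) C)

lemma exists_mult_pos_of_closed (hconn : (multigraph f).Connected) {C : Finset (Fin n)}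
    {p u : Fin n} (hp : p ∈ C) (hu : u ∉ C) (hC : ∀ p ∈ C, ∀ q ∉ C, q ≠ u → mult f p q = 0) :
    ∃ q ∈ C, 0 < mult f q u := by
  obtain ⟨d, -, hd₁, hd₂⟩ := (hconn.preconnected p u).some.exists_boundary_dart (↑C) hp hu
  have hadj := multigraph_adj.mp d.adj
  obtain rfl : d.snd = u := by
    by_contra h
    rw [hC _ hd₁ _ hd₂ h] at hadj
    exact lt_irrefl 0 hadj
  exact ⟨d.fst, hd₁, hadj⟩

section Shortcut

variable {g : Edge n → ℕ} {u v w : Fin n}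

lemma mdeg_shortcut (huv : u ≠ v) (huw : u ≠ w) (hvw : v ≠ w) (p : Fin n) :
    mdeg (g + edgeUnit s(u, v) + edgeUnit s(u, w)) p
      = mdeg (g + edgeUnit s(v, w)) p + if p = u then 2 else 0 := by
  simp only [mdeg_add, mdeg_edgeUnit huv, mdeg_edgeUnit huw, mdeg_edgeUnit hvw]
  by_cases hpu : p = u
  · subst hpu
    simp [huv, huw]
  · by_cases hpv : p = v <;> by_cases hpw : p = w <;> simp_all

lemma mult_shortcut_right (huv : u ≠ v) (huw : u ≠ w) (hvw : v ≠ w) (q : Fin n) :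
    mult (g + edgeUnit s(u, v) + edgeUnit s(u, w)) q u
      = mult (g + edgeUnit s(v, w)) q u + (if q = v then 1 else 0) + if q = w then 1 else 0 := by
  simp only [mult_add, mult_edgeUnit huv, mult_edgeUnit huw, mult_edgeUnit hvw, Sym2.eq_iff]
  by_cases hqv : q = v <;> by_cases hqw : q = w <;> simp_all [eq_comm]

lemma mult_le_mult_shortcut (huv : u ≠ v) (huw : u ≠ w) (hvw : v ≠ w) {p q : Fin n}
    (hp : p ≠ u) (hq : q ≠ u) :
    mult (g + edgeUnit s(u, v) + edgeUnit s(u, w)) p q ≤ mult (g + edgeUnit s(v, w)) p q := by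
  simp only [mult_add, mult_edgeUnit huv, mult_edgeUnit huw, mult_edgeUnit hvw, Sym2.eq_iff]
  simp [hp.symm, hq.symm]

/- The component `C` is joined to `u` by an even, positive number of edges. The shortcut
removes one edge from `u` to `v` and one to `w`, so `C` loses all of them only if these were its
only two: `hsep` excludes this when `v` and `w` are separated, and `hu` otherwise. -/
lemma exists_mult_shortcut_pos (huv : u ≠ v) (huw : u ≠ w) (hvw : v ≠ w)
    (hfg : f = g + edgeUnit s(u, v) + edgeUnit s(u, w)) (hf : IsEulerianMultigraph f)
    (hu : 4 ≤ mdeg f u)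
    (hsep : ¬ ((multigraph f).deleteIncidenceSet u).Reachable v w ∨
      ∀ z, 0 < mult f u z → ((multigraph f).deleteIncidenceSet u).Reachable v z)
    {p : Fin n} (hpu : p ≠ u) {C : Finset (Fin n)}
    (hC : ∀ q, q ∈ C ↔ ((multigraph f).deleteIncidenceSet u).Reachable p q) :
    ∃ q ∈ C, 0 < mult (g + edgeUnit s(v, w)) q u := by
  have huC : u ∉ C := fun h => hpu (eq_of_reachable_deleteIncidenceSet ((hC u).1 h).symm)
  have hclosed : ∀ q ∈ C, ∀ r ∉ C, r ≠ u → mult f q r = 0 := fun q hq r hr hru =>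
    Nat.eq_zero_of_not_pos <| mt multigraph_adj.2 <|
      not_adj_of_reachable_deleteIncidenceSet hpu ((hC q).1 hq) (mt (hC r).2 hr) hru
  by_contra! hnone
  have hsum : ∑ q ∈ C, mult f q u = (if v ∈ C then 1 else 0) + if w ∈ C then 1 else 0 := by
    simp only [hfg, mult_shortcut_right huv huw hvw, sum_add_distrib, sum_ite_eq']
    rw [sum_eq_zero fun q hq => Nat.le_zero.mp (hnone q hq), zero_add]
  have heven := Nat.even_iff.mp (even_sum_mult_of_closed hf.even huC hclosed)
  obtain ⟨q₀, hq₀C, hq₀⟩ :=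
    exists_mult_pos_of_closed hf.connected ((hC p).2 (Reachable.refl p)) huC hclosed
  have hpos := hq₀.trans_le
    (single_le_sum (f := fun q => mult f q u) (fun _ _ => Nat.zero_le _) hq₀C)
  rw [hsum] at heven hpos
  have hvC : v ∈ C := by
    by_contra h
    rw [if_neg h] at heven hpos
    split_ifs at heven hpos
    omega
  have hwC : w ∈ C := by
    by_contra h
    rw [if_neg h, if_pos hvC] at heven
    omega
  rcases hsep with hsep | hsep
  · exact hsep (((hC v).1 hvC).symm.trans ((hC w).1 hwC))
  · have hdeg : mdeg f u = ∑ q ∈ C, mult f q u := by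
      rw [mdeg, ← sum_subset (subset_univ C)]
      · exact sum_congr rfl fun q _ => mult_comm f u q
      · intro q _ hq
        by_contra h
        exact hq ((hC q).2 (((hC v).1 hvC).trans (hsep q (Nat.pos_of_ne_zero h))))
    rw [hdeg, hsum, if_pos hvC, if_pos hwC] at hu
    omega

lemma IsEulerianMultigraph.shortcut (huv : u ≠ v) (huw : u ≠ w) (hvw : v ≠ w)
    (hfg : f = g + edgeUnit s(u, v) + edgeUnit s(u, w)) (hf : IsEulerianMultigraph f)
    (hu : 4 ≤ mdeg f u)
    (hsep : ¬ ((multigraph f).deleteIncidenceSet u).Reachable v w ∨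
      ∀ z, 0 < mult f u z → ((multigraph f).deleteIncidenceSet u).Reachable v z) :
    IsEulerianMultigraph (g + edgeUnit s(v, w)) := by
  classical
  have hdeg : ∀ p, mdeg f p = mdeg (g + edgeUnit s(v, w)) p + if p = u then 2 else 0 :=
    hfg ▸ mdeg_shortcut huv huw hvw
  have := hf.connected.nonempty
  have hreach : ∀ p, (multigraph (g + edgeUnit s(v, w))).Reachable p u := by
    intro p
    rcases eq_or_ne p u with rfl | hpu
    · rfl
    obtain ⟨q, hqC, hq⟩ := exists_mult_shortcut_pos huv huw hvw hfg hf hu hsep hpu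
      (C := univ.filter (((multigraph f).deleteIncidenceSet u).Reachable p)) (by simp)
    have hle : (multigraph f).deleteIncidenceSet u ≤ multigraph (g + edgeUnit s(v, w)) :=
      fun q r h => by
        obtain ⟨hqr, hqu, hru⟩ := deleteIncidenceSet_adj.1 h
        exact multigraph_adj.2 ((multigraph_adj.1 hqr).trans_le
          (hfg ▸ mult_le_mult_shortcut huv huw hvw hqu hru))
    exact (((mem_filter.1 hqC).2).mono hle).trans (multigraph_adj.2 hq).reachable
  refine ⟨⟨fun p q => (hreach p).trans (hreach q).symm⟩, fun p => ?_, fun p => ?_⟩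
  · have h := hf.even p
    rw [hdeg] at h
    split_ifs at h
    · exact (Nat.even_add.mp h).mpr even_two
    · simpa using h
  · rcases eq_or_ne p u with rfl | hpu
    · rw [hdeg, if_pos rfl] at hu
      omega
    · simpa [hdeg, hpu] using hf.pos p

end Shortcut

lemma IsEulerianMultigraph.exists_reduction_of_three_le_mult (hn : 3 ≤ n)
    (hf : IsEulerianMultigraph f) {u v : Fin n} (h : 3 ≤ mult f u v) :
    ∃ g, IsEulerianMultigraph g ∧ ∑ e, g e < ∑ e, f e ∧
      ∀ a, IsMetric a → dot a (Nat.cast ∘ g) ≤ dot a (Nat.cast ∘ f) := by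
  have huv : u ≠ v := by rintro rfl; simp at h
  obtain ⟨g₁, rfl⟩ := exists_eq_add_edgeUnit (by omega : 0 < mult f u v)
  rw [mult_add, mult_edgeUnit huv, if_pos rfl] at h
  obtain ⟨g, rfl⟩ := exists_eq_add_edgeUnit (by omega : 0 < mult g₁ u v)
  rw [mult_add, mult_edgeUnit huv, if_pos rfl] at h
  have hdeg : ∀ p, mdeg (g + edgeUnit s(u, v) + edgeUnit s(u, v)) p
      = mdeg g p + if p = u ∨ p = v then 2 else 0 := fun p => by
    simp only [mdeg_add, mdeg_edgeUnit huv]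
    split_ifs <;> rfl
  refine ⟨g, ⟨?_, fun p => ?_, fun p => ?_⟩, ?_, fun a hmet => ?_⟩
  · convert hf.connected using 1
    ext p q
    simp only [multigraph_adj, mult_add, mult_edgeUnit huv]
    split_ifs with hpq
    · rw [← mult_congr g hpq]
      omega
    · simp
  · have h := hf.even p
    rw [hdeg] at h
    split_ifs at h
    · exact (Nat.even_add.mp h).mpr even_two
    · simpa using h
  · by_cases hp : p = u ∨ p = v
    · rcases hp with rfl | rfl
      · exact (by omega : 0 < mult g p v).trans_le (mult_le_mdeg g p v)
      · rw [mult_comm] at h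
        exact (by omega : 0 < mult g p u).trans_le (mult_le_mdeg g p u)
    · simpa [hdeg, hp] using hf.pos p
  · simp only [Pi.add_apply, sum_add_distrib, sum_edgeUnit huv]
    omega
  · rw [dot_natCast_add, dot_natCast_add, dot_natCast_edgeUnit a huv]
    linarith [hmet.ev_nonneg hn u v]

lemma IsEulerianMultigraph.exists_reduction_of_four_le_mdeg (hf : IsEulerianMultigraph f)
    {u v₀ w₀ : Fin n} (hu : 4 ≤ mdeg f u) (hv₀ : 0 < mult f u v₀) (hw₀ : 0 < mult f u w₀)
    (hne : v₀ ≠ w₀) :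
    ∃ g, IsEulerianMultigraph g ∧ ∑ e, g e < ∑ e, f e ∧
      ∀ a, IsMetric a → dot a (Nat.cast ∘ g) ≤ dot a (Nat.cast ∘ f) := by
  set H := (multigraph f).deleteIncidenceSet u
  obtain ⟨v, w, hv, hw, hvw, hsep⟩ : ∃ v w, 0 < mult f u v ∧ 0 < mult f u w ∧ v ≠ w ∧
      (¬ H.Reachable v w ∨ ∀ z, 0 < mult f u z → H.Reachable v z) := by
    by_cases h : ∃ v w, 0 < mult f u v ∧ 0 < mult f u w ∧ ¬ H.Reachable v w
    · obtain ⟨v, w, hv, hw, hr⟩ := h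
      exact ⟨v, w, hv, hw, by rintro rfl; exact hr (Reachable.refl v), Or.inl hr⟩
    · push Not at h
      exact ⟨v₀, w₀, hv₀, hw₀, hne, Or.inr fun z hz => h v₀ z hv₀ hz⟩
  have huv : u ≠ v := by rintro rfl; simp at hv
  have huw : u ≠ w := by rintro rfl; simp at hw
  obtain ⟨g₁, hg₁⟩ := exists_eq_add_edgeUnit hw
  have hv₁ : 0 < mult g₁ u v := by
    rwa [hg₁, mult_add, mult_edgeUnit huw, if_neg fun h => hvw (Sym2.congr_right.1 h).symm,
      add_zero] at hv
  obtain ⟨g, rfl⟩ := exists_eq_add_edgeUnit hv₁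
  refine ⟨g + edgeUnit s(v, w), hf.shortcut huv huw hvw hg₁ hu hsep, ?_, fun a hmet => ?_⟩
  · simp only [hg₁, Pi.add_apply, sum_add_distrib, sum_edgeUnit huv, sum_edgeUnit huw,
      sum_edgeUnit hvw]
    omega
  · simp only [hg₁, dot_natCast_add, dot_natCast_edgeUnit a huv, dot_natCast_edgeUnit a huw,
      dot_natCast_edgeUnit a hvw]
    have := hmet u v w ⟨hvw, huv, huw⟩
    simp only [tri] at this
    linarith [ev_symm a v u]

lemma IsEulerianMultigraph.exists_reduction (hn : 3 ≤ n) (hf : IsEulerianMultigraph f)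
    (hdeg : ¬ ∀ p, mdeg f p = 2) :
    ∃ g, IsEulerianMultigraph g ∧ ∑ e, g e < ∑ e, f e ∧
      ∀ a, IsMetric a → dot a (Nat.cast ∘ g) ≤ dot a (Nat.cast ∘ f) := by
  by_cases h3 : ∃ u v, 3 ≤ mult f u v
  · obtain ⟨u, v, h⟩ := h3
    exact hf.exists_reduction_of_three_le_mult hn h
  push Not at h3 hdeg
  obtain ⟨u, hu⟩ := hdeg
  replace hu : 4 ≤ mdeg f u := by
    have := Nat.even_iff.mp (hf.even u)
    have := hf.pos u
    omega
  obtain ⟨v₀, hv₀⟩ := exists_mult_pos_of_mdeg_pos (hf.pos u)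
  obtain ⟨w₀, hw₀, hne⟩ : ∃ w, 0 < mult f u w ∧ v₀ ≠ w := by
    by_contra! h
    have : mdeg f u = mult f u v₀ := sum_eq_single v₀
      (fun w _ hw => Nat.eq_zero_of_not_pos fun hpos => hw (h w hpos).symm) (by simp)
    have := h3 u v₀
    omega
  exact hf.exists_reduction_of_four_le_mdeg hu hv₀ hw₀ hne

lemma exists_perm_adj_iff_of_isCycles {G : SimpleGraph (Fin n)} (hconn : G.Connected)
    (hcyc : G.IsCycles) {v : Fin n} (hv : (G.neighborSet v).Nonempty) :
    ∃ σ : Equiv.Perm (Fin n), ∀ x y, G.Adj x y ↔ ∃ i, s(x, y) = s(σ i, σ (nextF i)) := by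
  classical
  obtain ⟨p, hp, hverts⟩ :=
    hcyc.exists_cycle_toSubgraph_verts_eq_connectedComponentSupp (c := G.connectedComponentMk v)
      rfl hv
  have hmem : ∀ x, x ∈ p.toSubgraph.verts := fun x => by
    rw [hverts, ConnectedComponent.mem_supp_iff, ConnectedComponent.eq]
    exact hconn.preconnected x v
  have hham : p.IsHamiltonianCycle := by
    refine Walk.isHamiltonianCycle_iff_isCycle_and_support_count_tail_eq_one.2
      ⟨hp, fun x => List.count_eq_one_of_mem hp.support_nodup ?_⟩
    rcases eq_or_ne x v with rfl | hxv
    · exact p.end_mem_tail_support hp.not_nil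
    · have := (p.mem_verts_toSubgraph).1 (hmem x)
      rw [← p.cons_tail_support] at this
      exact (List.mem_cons.1 this).resolve_left hxv
  have hlen : p.length = n := by simpa using hham.length_eq
  have hinj : Function.Injective fun i : Fin n => p.getVert i := fun i j h =>
    Fin.ext (hp.getVert_injOn' (by simp; omega) (by simp; omega) h)
  let σ := Equiv.ofBijective _ (Finite.injective_iff_bijective.mp hinj)
  have hnext : ∀ i : Fin n, σ (nextF i) = p.getVert (i + 1) := fun i => by
    change p.getVert ((i + 1) % n) = _
    rcases Nat.lt_or_ge (i + 1) n with h | h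
    · rw [Nat.mod_eq_of_lt h]
    · rw [show (i : ℕ) + 1 = n by omega, Nat.mod_self, p.getVert_zero,
        p.getVert_of_length_le hlen.le]
  refine ⟨σ, fun x y => ?_⟩
  rw [← hp.adj_toSubgraph_iff_of_isCycles hcyc (hmem x), Walk.toSubgraph_adj_iff]
  constructor
  · rintro ⟨i, hi, hlt⟩
    exact ⟨⟨i, hlen ▸ hlt⟩, by rw [hnext]; exact hi.symm⟩
  · rintro ⟨i, hi⟩
    exact ⟨i, by rw [← hnext]; exact hi.symm, hlen.symm ▸ i.isLt⟩

lemma mult_le_one_of_mdeg_eq_two (hn : 3 ≤ n) (hconn : (multigraph f).Connected)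
    (hdeg : ∀ p, mdeg f p = 2) (p q : Fin n) : mult f p q ≤ 1 := by
  by_contra! h
  have honly : ∀ x y r, 2 ≤ mult f x y → r ≠ y → mult f x r = 0 := fun x y r hxy hry => by
    have := mult_add_mult_le_mdeg f x hry.symm
    have := hdeg x
    omega
  obtain ⟨z, hzp, hzq⟩ := exists_ne_and_ne hn p q
  obtain ⟨d, -, hd₁, hd₂⟩ := (hconn.preconnected p z).some.exists_boundary_dart
    {p, q} (by simp) (by simp [hzp, hzq])
  have hadj := multigraph_adj.mp d.adj
  simp only [Set.mem_insert_iff, Set.mem_singleton_iff, not_or] at hd₁ hd₂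
  rcases hd₁ with hd | hd <;> rw [hd] at hadj
  · rw [honly p q _ h hd₂.2] at hadj
    exact lt_irrefl 0 hadj
  · rw [honly q p _ (mult_comm f p q ▸ h) hd₂.1] at hadj
    exact lt_irrefl 0 hadj

lemma exists_hamVec_eq (hn : 3 ≤ n) (hconn : (multigraph f).Connected)
    (hdeg : ∀ p, mdeg f p = 2) : ∃ σ : Equiv.Perm (Fin n), Nat.cast ∘ f = hamVec σ := by
  classical
  have hle := mult_le_one_of_mdeg_eq_two hn hconn hdeg
  have hnbr : ∀ p, (multigraph f).neighborSet p = ↑(univ.filter (0 < mult f p ·)) := fun p => by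
    ext q
    simp [multigraph_adj]
  have hcyc : (multigraph f).IsCycles := fun p _ => by
    rw [hnbr, Set.ncard_coe_finset, card_filter, ← hdeg p, mdeg]
    exact sum_congr rfl fun q _ => by have := hle p q; split_ifs <;> omega
  obtain ⟨p₀⟩ := hconn.nonempty
  obtain ⟨q₀, hq₀⟩ := exists_mult_pos_of_mdeg_pos (f := f) (p := p₀) (by rw [hdeg]; norm_num)
  obtain ⟨σ, hσ⟩ := exists_perm_adj_iff_of_isCycles hconn hcyc ⟨q₀, multigraph_adj.2 hq₀⟩
  refine ⟨σ, funext fun e => ?_⟩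
  obtain ⟨⟨x, y⟩, he⟩ := e
  have hfe := mult_of_val_eq (f := f) (e := ⟨s(x, y), he⟩) rfl
  have := hle x y
  simp only [Function.comp_apply, hamVec, ← hσ, multigraph_adj]
  change ((f ⟨s(x, y), he⟩ : ℕ) : ℝ) = _
  rw [← hfe]
  split_ifs <;> norm_cast <;> omega

theorem IsEulerianMultigraph.le_dot (hn : 3 ≤ n) {a : Edge n → ℝ} {α : ℝ} (hmet : IsMetric a)
    (hvalid : ∀ σ, α ≤ dot a (hamVec σ)) (hf : IsEulerianMultigraph f) :
    α ≤ dot a (Nat.cast ∘ f) := by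
  induction hN : ∑ e, f e using Nat.strong_induction_on generalizing f with
  | _ N ih =>
  by_cases hdeg : ∀ p, mdeg f p = 2
  · obtain ⟨σ, hσ⟩ := exists_hamVec_eq hn hf.connected hdeg
    exact hσ ▸ hvalid σ
  · obtain ⟨g, hg, hlt, hle⟩ := hf.exists_reduction hn hdeg
    exact (ih _ (hN ▸ hlt) hg rfl).trans (hle a hmet)

end Multigraph

/-- a metric inequality valid for `S` is valid for `P`. -/
theorem stmt0 (n : ℕ) (hn : 5 ≤ n) (a : Edge n → ℝ) (α : ℝ)
    (hmet : IsMetric a)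
    (hvalid : ∀ σ : Equiv.Perm (Fin n), α ≤ dot a (hamVec σ)) :
    ∀ x ∈ gtsp n, α ≤ dot a x := by
  refine fun x hx => convexHull_min ?_ (convex_halfSpace_ge (isLinearMap_dot a) α) hx
  rintro x hx
  obtain ⟨f, rfl⟩ : ∃ f : Edge n → ℕ, x = Nat.cast ∘ f := by
    choose f hf using hx.1
    exact ⟨f, funext hf⟩
  exact (isEulerianMultigraph_of_isEulerian hx).le_dot (by omega) hmet hvalid

end TSP
end

section
/- For every a ∈ ℝ^E, the vector θ(a) := a − Σ_{u∈V} λ_u(a)·δ_u is tight triangular (TT); moreover λ(a) is the unique such coefficient vector: if μ ∈ ℝ^V is such that a − Σ_{u∈V} μ_u·δ_u is TT, then μ_u = λ_u(a) for every u ∈ V. -/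
open scoped BigOperators

namespace TSP
variable {n : ℕ}
/-!
Subtracting `∑ μ_u δ_u` lowers the slack `t_{u,vw}` of every rooted triangle by exactly `μ_u`:
`δ_p` puts `1/2` on each edge at `p`, so the contributions of `v` and `w` cancel and that of `u`
is counted twice. Hence `λ_u` drops by `μ_u`, and a vector is TT exactly when all its `λ_u`
vanish.
-/

lemma sum_mul_delta_of_val_eq (μ : Fin n → ℝ) {x y : Fin n} (hxy : x ≠ y) {e : Edge n}
    (he : e.val = s(x, y)) : ∑ p, μ p * delta p e = (μ x + μ y) / 2 := by
  have hterm : ∀ p, μ p * delta p e = if p ∈ ({x, y} : Finset (Fin n)) then μ p / 2 else 0 := by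
    intro p
    simp only [delta, he, Sym2.mem_iff, Finset.mem_insert, Finset.mem_singleton, mul_ite,
      mul_zero, mul_one_div]
  rw [Finset.sum_congr rfl fun p _ => hterm p, Finset.sum_ite_mem, Finset.univ_inter,
    Finset.sum_pair hxy, add_div]

lemma ev_sub_sum_mul_delta (a : Edge n → ℝ) (μ : Fin n → ℝ) {x y : Fin n} (hxy : x ≠ y) :
    ev (fun e => a e - ∑ p, μ p * delta p e) x y = ev a x y - (μ x + μ y) / 2 := by
  simp only [ev, dif_neg hxy]
  rw [sum_mul_delta_of_val_eq μ hxy rfl]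

lemma tri_sub_sum_mul_delta (a : Edge n → ℝ) (μ : Fin n → ℝ) {u v w : Fin n}
    (h : RootedTri u v w) :
    tri (fun e => a e - ∑ p, μ p * delta p e) u v w = tri a u v w - μ u := by
  obtain ⟨hvw, huv, huw⟩ := h
  simp only [tri, ev_sub_sum_mul_delta a μ huv.symm, ev_sub_sum_mul_delta a μ huw,
    ev_sub_sum_mul_delta a μ hvw]
  ring

lemma exists_rootedTri (hn : 3 ≤ n) (u : Fin n) : ∃ v w, RootedTri u v w := by
  obtain ⟨v, -, hvu⟩ := Finset.exists_mem_ne (s := Finset.univ) (by simp; omega) u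
  obtain ⟨w, hw, hwv⟩ := Finset.exists_mem_ne (s := Finset.univ.erase u)
    (by rw [Finset.card_erase_of_mem (Finset.mem_univ u)]; simp; omega) v
  exact ⟨v, w, hwv.symm, hvu.symm, (Finset.ne_of_mem_erase hw).symm⟩

lemma finite_setOf_tri (a : Edge n → ℝ) (u : Fin n) :
    {r | ∃ v w, RootedTri u v w ∧ r = tri a u v w}.Finite := by
  refine (Set.finite_range fun p : Fin n × Fin n => tri a u p.1 p.2).subset ?_
  rintro r ⟨v, w, -, rfl⟩
  exact ⟨(v, w), rfl⟩

lemma lam_le_tri (a : Edge n → ℝ) {u v w : Fin n} (h : RootedTri u v w) :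
    lam a u ≤ tri a u v w :=
  csInf_le (finite_setOf_tri a u).bddBelow ⟨v, w, h, rfl⟩

lemma exists_tri_eq_lam (hn : 3 ≤ n) (a : Edge n → ℝ) (u : Fin n) :
    ∃ v w, RootedTri u v w ∧ tri a u v w = lam a u := by
  obtain ⟨v₀, w₀, h₀⟩ := exists_rootedTri hn u
  obtain ⟨v, w, h, hmin⟩ : lam a u ∈ {r | ∃ v w, RootedTri u v w ∧ r = tri a u v w} :=
    Set.Nonempty.csInf_mem ⟨_, v₀, w₀, h₀, rfl⟩ (finite_setOf_tri a u)
  exact ⟨v, w, h, hmin.symm⟩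

lemma lam_sub_sum_mul_delta (hn : 3 ≤ n) (a : Edge n → ℝ) (μ : Fin n → ℝ) (u : Fin n) :
    lam (fun e => a e - ∑ p, μ p * delta p e) u = lam a u - μ u := by
  apply le_antisymm
  · obtain ⟨v, w, h, hmin⟩ := exists_tri_eq_lam hn a u
    calc _ ≤ _ := lam_le_tri _ h
      _ = lam a u - μ u := by rw [tri_sub_sum_mul_delta a μ h, hmin]
  · obtain ⟨v, w, h, hmin⟩ := exists_tri_eq_lam hn (fun e => a e - ∑ p, μ p * delta p e) u
    calc lam a u - μ u ≤ tri a u v w - μ u := by gcongr; exact lam_le_tri a h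
      _ = _ := by rw [← tri_sub_sum_mul_delta a μ h, hmin]

lemma isTT_iff_forall_lam_eq_zero (hn : 3 ≤ n) (b : Edge n → ℝ) :
    IsTT b ↔ ∀ u, lam b u = 0 := by
  constructor
  · rintro ⟨hmetric, htight⟩ u
    obtain ⟨v, w, h, hzero⟩ := htight u
    obtain ⟨v', w', h', hmin⟩ := exists_tri_eq_lam hn b u
    exact le_antisymm (hzero ▸ lam_le_tri b h) (hmin ▸ hmetric u v' w' h')
  · intro hlam
    refine ⟨fun u v w h => hlam u ▸ lam_le_tri b h, fun u => ?_⟩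
    obtain ⟨v, w, h, hmin⟩ := exists_tri_eq_lam hn b u
    exact ⟨v, w, h, hmin.trans (hlam u)⟩

lemma isTT_sub_sum_mul_delta_iff (hn : 3 ≤ n) (a : Edge n → ℝ) (μ : Fin n → ℝ) :
    IsTT (fun e => a e - ∑ p, μ p * delta p e) ↔ ∀ u, μ u = lam a u := by
  simp only [isTT_iff_forall_lam_eq_zero hn, lam_sub_sum_mul_delta hn, sub_eq_zero]
  exact forall_congr' fun _ => eq_comm

/-- `θ(a)` is the unique TT representative of the coset `a + span δ`. -/
theorem stmt4 (n : ℕ) (hn : 5 ≤ n) (a : Edge n → ℝ) :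
    IsTT (theta a) ∧
      ∀ μ : Fin n → ℝ, IsTT (fun e => a e - ∑ u, μ u * delta u e) →
        ∀ u, μ u = lam a u := by
  have h3 : 3 ≤ n := by omega
  exact ⟨(isTT_sub_sum_mul_delta_iff h3 a (lam a)).2 fun _ => rfl,
    fun μ => (isTT_sub_sum_mul_delta_iff h3 a μ).1⟩

end TSP
end
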